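/- Let k ≥ 2 and n ≥ k be integers, let D be a directed (k−1)-tree on n vertices, and let v be a vertex with reciprocal-degree exactly k−1 in D. Then D − v is a directed (k−1)-tree on n−1 vertices. -/
import Mathlib


/-- A finite strict digraph: a finite vertex set and a finite set of arcs
(ordered pairs), with no loops, and all arc endpoints in the vertex set. -/
structure Dgraph where
  verts : Finset ℕ
  arcs : Finset (ℕ × ℕ)
  arcs_mem : ∀ e ∈ arcs, e.1 ∈ verts ∧ e.2 ∈ verts
  no_loops : ∀ e ∈ arcs, e.1 ≠ e.2

namespace Dgraph

/-- `H` is a subdigraph of `D`. -/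
def IsSubdigraph (H D : Dgraph) : Prop := H.verts ⊆ D.verts ∧ H.arcs ⊆ D.arcs

/-- Reachability by a directed path. -/
def Reach (D : Dgraph) (u v : ℕ) : Prop :=
  Relation.ReflTransGen (fun a b => (a, b) ∈ D.arcs) u v

/-- `D` is strongly connected. -/
def StronglyConnected (D : Dgraph) : Prop :=
  ∀ u ∈ D.verts, ∀ v ∈ D.verts, D.Reach u v

/-- Deletion of a set of vertices. -/
def delete (D : Dgraph) (S : Finset ℕ) : Dgraph where
  verts := D.verts \ S
  arcs := D.arcs.filter (fun e => e.1 ∉ S ∧ e.2 ∉ S)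
  arcs_mem := by
    intro e he
    simp only [Finset.mem_filter] at he
    have h := D.arcs_mem e he.1
    simp only [Finset.mem_sdiff]
    exact ⟨⟨h.1, he.2.1⟩, ⟨h.2, he.2.2⟩⟩
  no_loops := fun e he => D.no_loops e (Finset.mem_filter.mp he).1

/-- The subdigraph induced by a set of vertices. -/
def induce (D : Dgraph) (S : Finset ℕ) : Dgraph where
  verts := D.verts ∩ S
  arcs := D.arcs.filter (fun e => e.1 ∈ S ∧ e.2 ∈ S)
  arcs_mem := by
    intro e he
    simp only [Finset.mem_filter] at he
    have h := D.arcs_mem e he.1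
    simp only [Finset.mem_inter]
    exact ⟨⟨h.1, he.2.1⟩, ⟨h.2, he.2.2⟩⟩
  no_loops := fun e he => D.no_loops e (Finset.mem_filter.mp he).1

/-- The complete digraph on a vertex set `S`. -/
def completeOn (S : Finset ℕ) : Dgraph where
  verts := S
  arcs := (S ×ˢ S).filter (fun e => e.1 ≠ e.2)
  arcs_mem := by
    intro e he
    simp only [Finset.mem_filter, Finset.mem_product] at he
    exact ⟨he.1.1, he.1.2⟩
  no_loops := fun e he => (Finset.mem_filter.mp he).2

/-- Adding the arc `(u, v)` (when this is a legal new arc). -/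
def addArc (D : Dgraph) (u v : ℕ) : Dgraph where
  verts := D.verts
  arcs := if u ∈ D.verts ∧ v ∈ D.verts ∧ u ≠ v then insert (u, v) D.arcs else D.arcs
  arcs_mem := by
    intro e he
    split at he
    · rcases Finset.mem_insert.mp he with h | h
      · subst h; exact ⟨by tauto, by tauto⟩
      · exact D.arcs_mem e h
    · exact D.arcs_mem e he
  no_loops := by
    intro e he
    split at he
    · rcases Finset.mem_insert.mp he with h | h
      · subst h; tauto
      · exact D.no_loops e h
    · exact D.no_loops e he

/-- `D` is `k`-strongly connected: it has at least `k+1` vertices and removing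
any fewer than `k` vertices leaves a strongly connected digraph. -/
def KStrong (D : Dgraph) (k : ℕ) : Prop :=
  k + 1 ≤ D.verts.card ∧
    ∀ S : Finset ℕ, S.card < k → StronglyConnected (D.delete S)

/-- `(u, v)` is an arc of the complement of `D`. -/
def MissingArc (D : Dgraph) (u v : ℕ) : Prop :=
  u ∈ D.verts ∧ v ∈ D.verts ∧ u ≠ v ∧ (u, v) ∉ D.arcs

/-- `D` is `𝒟ₖ`-saturated: it has no `k`-strongly connected subdigraph, but
adding any missing arc creates one. -/
def DSaturated (D : Dgraph) (k : ℕ) : Prop :=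
  (∀ H : Dgraph, H.IsSubdigraph D → ¬ H.KStrong k) ∧
    ∀ u v : ℕ, D.MissingArc u v →
      ∃ H : Dgraph, H.IsSubdigraph (D.addArc u v) ∧ H.KStrong k

/-- `S` is a separator of `D`. -/
def IsSeparator (D : Dgraph) (S : Finset ℕ) : Prop :=
  S ⊆ D.verts ∧
    (¬ StronglyConnected (D.delete S) ∨ (D.delete S).verts.card ≤ 1)

/-- `S` is a minimum separator of `D`. -/
def IsMinSeparator (D : Dgraph) (S : Finset ℕ) : Prop :=
  D.IsSeparator S ∧ ∀ T : Finset ℕ, D.IsSeparator T → S.card ≤ T.card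

/-- `B` is the vertex set of a strong component of `D`: a maximal set of
vertices inducing a strongly connected subdigraph. -/
def IsStrongComponent (D : Dgraph) (B : Finset ℕ) : Prop :=
  B ⊆ D.verts ∧ B.Nonempty ∧ StronglyConnected (D.induce B) ∧
    ∀ B' : Finset ℕ, B ⊆ B' → B' ⊆ D.verts →
      StronglyConnected (D.induce B') → B' = B

/-- The reciprocal-degree of `v` in `D`. -/
def recipDeg (D : Dgraph) (v : ℕ) : ℕ :=
  (D.verts.filter (fun w => (v, w) ∈ D.arcs ∧ (w, v) ∈ D.arcs)).card

/-- Extend `D` by a new vertex `v`: bidirectional arcs to every vertex of `K`,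
and unidirectional arcs (all out of `v` if `out`, else all into `v`) to every
other vertex of `D`. -/
def extend (D : Dgraph) (v : ℕ) (K : Finset ℕ) (out : Bool) : Dgraph where
  verts := insert v D.verts
  arcs := D.arcs
    ∪ ((K ∩ D.verts).filter (· ≠ v)).image (fun w => (w, v))
    ∪ ((K ∩ D.verts).filter (· ≠ v)).image (fun w => (v, w))
    ∪ (if out then ((D.verts \ K).filter (· ≠ v)).image (fun w => (v, w))
        else ((D.verts \ K).filter (· ≠ v)).image (fun w => (w, v)))
  arcs_mem := by
    intro e he
    rcases Finset.mem_union.mp he with h | h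
    · rcases Finset.mem_union.mp h with h | h
      · rcases Finset.mem_union.mp h with h | h
        · have h2 := D.arcs_mem e h
          exact ⟨Finset.mem_insert_of_mem h2.1, Finset.mem_insert_of_mem h2.2⟩
        · obtain ⟨w, hw, rfl⟩ := Finset.mem_image.mp h
          have hwD := (Finset.mem_inter.mp (Finset.mem_filter.mp hw).1).2
          exact ⟨Finset.mem_insert_of_mem hwD, Finset.mem_insert_self _ _⟩
      · obtain ⟨w, hw, rfl⟩ := Finset.mem_image.mp h
        have hwD := (Finset.mem_inter.mp (Finset.mem_filter.mp hw).1).2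
        exact ⟨Finset.mem_insert_self _ _, Finset.mem_insert_of_mem hwD⟩
    · cases out with
      | true =>
        simp only [if_true] at h
        obtain ⟨w, hw, rfl⟩ := Finset.mem_image.mp h
        have hwD := (Finset.mem_sdiff.mp (Finset.mem_filter.mp hw).1).1
        exact ⟨Finset.mem_insert_self _ _, Finset.mem_insert_of_mem hwD⟩
      | false =>
        simp only [Bool.false_eq_true, if_false] at h
        obtain ⟨w, hw, rfl⟩ := Finset.mem_image.mp h
        have hwD := (Finset.mem_sdiff.mp (Finset.mem_filter.mp hw).1).1
        exact ⟨Finset.mem_insert_of_mem hwD, Finset.mem_insert_self _ _⟩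
  no_loops := by
    intro e he
    rcases Finset.mem_union.mp he with h | h
    · rcases Finset.mem_union.mp h with h | h
      · rcases Finset.mem_union.mp h with h | h
        · exact D.no_loops e h
        · obtain ⟨w, hw, rfl⟩ := Finset.mem_image.mp h
          exact (Finset.mem_filter.mp hw).2
      · obtain ⟨w, hw, rfl⟩ := Finset.mem_image.mp h
        exact fun hvw => (Finset.mem_filter.mp hw).2 hvw.symm
    · cases out with
      | true =>
        simp only [if_true] at h
        obtain ⟨w, hw, rfl⟩ := Finset.mem_image.mp h
        exact fun hvw => (Finset.mem_filter.mp hw).2 hvw.symm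
      | false =>
        simp only [Bool.false_eq_true, if_false] at h
        obtain ⟨w, hw, rfl⟩ := Finset.mem_image.mp h
        exact (Finset.mem_filter.mp hw).2

/-- The recursively defined family of directed `m`-trees. -/
inductive IsDTree (m : ℕ) : Dgraph → Prop
  | base (S : Finset ℕ) (h : S.card = m) : IsDTree m (completeOn S)
  | grow (D : Dgraph) (hD : IsDTree m D) (v : ℕ) (hv : v ∉ D.verts)
      (K : Finset ℕ) (hK : K ⊆ D.verts) (hKcard : K.card = m)
      (hKcomplete : (completeOn K).IsSubdigraph D) (out : Bool) :
      IsDTree m (D.extend v K out)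

/-- `D` is a tournament: exactly one arc between any two distinct vertices. -/
def IsTournament (D : Dgraph) : Prop :=
  ∀ u ∈ D.verts, ∀ v ∈ D.verts, u ≠ v → ((u, v) ∈ D.arcs ↔ (v, u) ∉ D.arcs)

/-- `D` is acyclic: it has no directed cycle. -/
def Acyclic (D : Dgraph) : Prop :=
  ∀ v : ℕ, ¬ Relation.TransGen (fun a b => (a, b) ∈ D.arcs) v v

end Dgraph

open Dgraph

namespace Dgraph

lemma ext' {D E : Dgraph} (h1 : D.verts = E.verts) (h2 : D.arcs = E.arcs) : D = E := by
  cases D; cases E; simp_all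

lemma completeOn_verts (S : Finset ℕ) : (completeOn S).verts = S := rfl

lemma mem_completeOn_arcs {S : Finset ℕ} {a b : ℕ} :
    (a, b) ∈ (completeOn S).arcs ↔ a ∈ S ∧ b ∈ S ∧ a ≠ b := by
  simp [completeOn, Finset.mem_filter, Finset.mem_product, and_assoc]

lemma delete_verts (D : Dgraph) (S : Finset ℕ) : (D.delete S).verts = D.verts \ S := rfl

lemma mem_delete_arcs {D : Dgraph} {S : Finset ℕ} {a b : ℕ} :
    (a, b) ∈ (D.delete S).arcs ↔ (a, b) ∈ D.arcs ∧ a ∉ S ∧ b ∉ S := by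
  simp [delete, Finset.mem_filter]

lemma extend_verts (D : Dgraph) (v : ℕ) (K : Finset ℕ) (out : Bool) :
    (D.extend v K out).verts = insert v D.verts := rfl

lemma mem_extend_arcs {D : Dgraph} {v : ℕ} {K : Finset ℕ} {out : Bool}
    (hK : K ⊆ D.verts) (hv : v ∉ D.verts) {a b : ℕ} :
    (a, b) ∈ (D.extend v K out).arcs ↔
      (a, b) ∈ D.arcs ∨ (b = v ∧ a ∈ K) ∨ (a = v ∧ b ∈ K) ∨
      (out = true ∧ a = v ∧ b ∈ D.verts ∧ b ∉ K) ∨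
      (out = false ∧ b = v ∧ a ∈ D.verts ∧ a ∉ K) := by
  have h1 : (K ∩ D.verts).filter (· ≠ v) = K := by
    ext x
    simp only [Finset.mem_filter, Finset.mem_inter]
    exact ⟨fun h => h.1.1, fun h => ⟨⟨h, hK h⟩, fun e => hv (e ▸ hK h)⟩⟩
  have h2 : (D.verts \ K).filter (· ≠ v) = D.verts \ K := by
    ext x
    simp only [Finset.mem_filter, Finset.mem_sdiff]
    exact ⟨fun h => h.1, fun h => ⟨h, fun e => hv (e ▸ h.1)⟩⟩
  show _ ∈ _ ∪ _ ∪ _ ∪ _ ↔ _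
  rw [h1, h2]
  cases out <;>
    simp only [if_true, if_false, Bool.false_eq_true, Finset.mem_union, Finset.mem_image,
      Finset.mem_sdiff, Prod.mk.injEq] <;> aesop

end Dgraph

namespace Dgraph

/-- The set of reciprocal neighbours. -/
def recipSet (D : Dgraph) (v : ℕ) : Finset ℕ :=
  D.verts.filter (fun w => (v, w) ∈ D.arcs ∧ (w, v) ∈ D.arcs)

lemma recipDeg_eq (D : Dgraph) (v : ℕ) : D.recipDeg v = (D.recipSet v).card := rfl

lemma recipSet_subset (D : Dgraph) (v : ℕ) : D.recipSet v ⊆ D.verts :=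
  Finset.filter_subset _ _

lemma recipSet_extend_self {D : Dgraph} {v : ℕ} {K : Finset ℕ} {out : Bool}
    (hK : K ⊆ D.verts) (hv : v ∉ D.verts) :
    (D.extend v K out).recipSet v = K := by
  ext w
  have hvK : v ∉ K := fun h => hv (hK h)
  have h1 : (v, w) ∉ D.arcs := fun h => hv (D.arcs_mem _ h).1
  have h2 : (w, v) ∉ D.arcs := fun h => hv (D.arcs_mem _ h).2
  have hK' : w ∈ K → w ∈ D.verts := fun h => hK h
  have hout : ¬(out = true ∧ out = false) := by cases out <;> simp
  have hwv1 : w = v → w ∉ K := fun e => e ▸ hvK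
  have hwv2 : w = v → w ∉ D.verts := fun e => e ▸ hv
  simp only [recipSet, Finset.mem_filter, extend_verts, Finset.mem_insert,
    mem_extend_arcs hK hv]
  aesop

lemma recipSet_extend_old {D : Dgraph} {v : ℕ} {K : Finset ℕ} {out : Bool}
    (hK : K ⊆ D.verts) (hv : v ∉ D.verts) {u : ℕ} (hu : u ∈ D.verts) :
    (D.extend v K out).recipSet u =
      if u ∈ K then insert v (D.recipSet u) else D.recipSet u := by
  ext w
  have huv : u ≠ v := fun e => hv (e ▸ hu)
  have h1 : (u, v) ∉ D.arcs := fun h => hv (D.arcs_mem _ h).2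
  have h2 : (v, u) ∉ D.arcs := fun h => hv (D.arcs_mem _ h).1
  have h3 : (u, w) ∈ D.arcs → w ∈ D.verts := fun h => (D.arcs_mem _ h).2
  have h4 : w = v → (u, w) ∉ D.arcs := fun e => e ▸ h1
  have h5 : w = v → (w, u) ∉ D.arcs := fun e => e ▸ h2
  have h6 : w ∈ D.verts → w ≠ v := fun h e => hv (e ▸ h)
  have hout : ¬(out = true ∧ out = false) := by cases out <;> simp
  by_cases huK : u ∈ K <;>
    simp only [recipSet, Finset.mem_filter, extend_verts, Finset.mem_insert,
      mem_extend_arcs hK hv, huK, if_true, if_false] <;>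
    aesop

lemma recipDeg_extend_self {D : Dgraph} {v : ℕ} {K : Finset ℕ} {out : Bool}
    (hK : K ⊆ D.verts) (hv : v ∉ D.verts) :
    (D.extend v K out).recipDeg v = K.card := by
  rw [recipDeg_eq, recipSet_extend_self hK hv]

lemma recipDeg_extend_mem {D : Dgraph} {v : ℕ} {K : Finset ℕ} {out : Bool}
    (hK : K ⊆ D.verts) (hv : v ∉ D.verts) {u : ℕ} (hu : u ∈ D.verts) (huK : u ∈ K) :
    (D.extend v K out).recipDeg u = D.recipDeg u + 1 := by
  rw [recipDeg_eq, recipSet_extend_old hK hv hu, if_pos huK,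
    Finset.card_insert_of_notMem (fun h => hv (recipSet_subset D u h)), recipDeg_eq]

lemma recipDeg_extend_notMem {D : Dgraph} {v : ℕ} {K : Finset ℕ} {out : Bool}
    (hK : K ⊆ D.verts) (hv : v ∉ D.verts) {u : ℕ} (hu : u ∈ D.verts) (huK : u ∉ K) :
    (D.extend v K out).recipDeg u = D.recipDeg u := by
  rw [recipDeg_eq, recipSet_extend_old hK hv hu, if_neg huK, recipDeg_eq]

lemma recipDeg_completeOn {S : Finset ℕ} {v : ℕ} (hv : v ∈ S) :
    (completeOn S).recipDeg v = S.card - 1 := by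
  have h : (completeOn S).recipSet v = S.erase v := by
    ext w
    simp only [recipSet, Finset.mem_filter, completeOn_verts, mem_completeOn_arcs,
      Finset.mem_erase]
    constructor
    · rintro ⟨hw, ⟨-, -, h⟩, -⟩; exact ⟨Ne.symm h, hw⟩
    · rintro ⟨hne, hw⟩; exact ⟨hw, ⟨hv, hw, fun e => hne e.symm⟩, ⟨hw, hv, hne⟩⟩
  rw [recipDeg_eq, h, Finset.card_erase_of_mem hv]

end Dgraph

namespace Dgraph

lemma eq_completeOn {D : Dgraph} (h : (completeOn D.verts).IsSubdigraph D) :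
    D = completeOn D.verts := by
  refine ext' rfl (Finset.Subset.antisymm ?_ h.2)
  rintro ⟨a, b⟩ he
  exact mem_completeOn_arcs.mpr ⟨(D.arcs_mem _ he).1, (D.arcs_mem _ he).2, D.no_loops _ he⟩

lemma extend_complete {S : Finset ℕ} {w : ℕ} (hw : w ∉ S) (out : Bool) :
    (completeOn S).extend w S out = completeOn (insert w S) := by
  refine ext' rfl ?_
  ext ⟨a, b⟩
  have hKv : S ⊆ (completeOn S).verts := Finset.Subset.refl S
  have hwv : w ∉ (completeOn S).verts := hw
  have ha : a ∈ S → a ≠ w := fun h e => hw (e ▸ h)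
  have hb : b ∈ S → b ≠ w := fun h e => hw (e ▸ h)
  simp only [mem_extend_arcs hKv hwv, mem_completeOn_arcs, completeOn_verts,
    Finset.mem_insert]
  constructor
  · rintro (⟨h1, h2, h3⟩ | ⟨rfl, h⟩ | ⟨rfl, h⟩ | ⟨-, -, h1, h2⟩ | ⟨-, -, h1, h2⟩)
    · exact ⟨Or.inr h1, Or.inr h2, h3⟩
    · exact ⟨Or.inr h, Or.inl rfl, ha h⟩
    · exact ⟨Or.inl rfl, Or.inr h, fun e => hb h e.symm⟩
    · exact absurd h1 h2
    · exact absurd h1 h2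
  · rintro ⟨ha', hb', hab⟩
    rcases ha' with rfl | ha'
    · rcases hb' with rfl | hb'
      · exact absurd rfl hab
      · exact Or.inr (Or.inr (Or.inl ⟨rfl, hb'⟩))
    · rcases hb' with rfl | hb'
      · exact Or.inr (Or.inl ⟨rfl, ha'⟩)
      · exact Or.inl ⟨ha', hb', hab⟩

lemma delete_completeOn (S : Finset ℕ) (v : ℕ) :
    (completeOn S).delete {v} = completeOn (S \ {v}) := by
  refine ext' rfl ?_
  ext ⟨a, b⟩
  simp only [mem_delete_arcs, mem_completeOn_arcs, Finset.mem_sdiff, Finset.mem_singleton]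
  tauto

lemma delete_extend_self {D : Dgraph} {v : ℕ} {K : Finset ℕ} {out : Bool}
    (hK : K ⊆ D.verts) (hv : v ∉ D.verts) :
    (D.extend v K out).delete {v} = D := by
  refine ext' ?_ ?_
  · ext a
    simp only [delete_verts, extend_verts, Finset.mem_sdiff, Finset.mem_insert,
      Finset.mem_singleton]
    constructor
    · rintro ⟨rfl | h, hne⟩
      · exact absurd rfl hne
      · exact h
    · intro h
      exact ⟨Or.inr h, fun e => hv (e ▸ h)⟩
  · ext ⟨a, b⟩
    have ha : (a, b) ∈ D.arcs → a ∈ D.verts ∧ b ∈ D.verts := fun h => D.arcs_mem _ h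
    have hav : a ∈ D.verts → a ≠ v := fun h e => hv (e ▸ h)
    have hbv : b ∈ D.verts → b ≠ v := fun h e => hv (e ▸ h)
    have haK : a ∈ K → a ≠ v := fun h => hav (hK h)
    have hbK : b ∈ K → b ≠ v := fun h => hbv (hK h)
    simp only [mem_delete_arcs, mem_extend_arcs hK hv, Finset.mem_singleton]
    constructor
    · rintro ⟨h | ⟨rfl, h⟩ | ⟨rfl, h⟩ | ⟨-, rfl, -⟩ | ⟨-, rfl, -⟩, hne1, hne2⟩
      · exact h
      · exact absurd rfl hne2
      · exact absurd rfl hne1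
      · exact absurd rfl hne1
      · exact absurd rfl hne2
    · intro h
      exact ⟨Or.inl h, hav (ha h).1, hbv (ha h).2⟩

lemma delete_extend_comm {D : Dgraph} {v u : ℕ} {K : Finset ℕ} {out : Bool}
    (hK : K ⊆ D.verts) (hv : v ∉ D.verts) (huv : u ≠ v) (huK : u ∉ K) :
    (D.extend v K out).delete {u} = (D.delete {u}).extend v K out := by
  have hK' : K ⊆ (D.delete {u}).verts := by
    intro x hx
    rw [delete_verts, Finset.mem_sdiff, Finset.mem_singleton]
    exact ⟨hK hx, fun e => huK (e ▸ hx)⟩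
  have hv' : v ∉ (D.delete {u}).verts := by
    rw [delete_verts, Finset.mem_sdiff]
    exact fun h => hv h.1
  refine ext' ?_ ?_
  · ext a
    have h1 : a = v → a ≠ u := fun e => e ▸ Ne.symm huv
    simp only [delete_verts, extend_verts, Finset.mem_sdiff, Finset.mem_insert,
      Finset.mem_singleton]
    tauto
  · ext ⟨a, b⟩
    have haK : a ∈ K → a ≠ u := fun h e => huK (e ▸ h)
    have hbK : b ∈ K → b ≠ u := fun h e => huK (e ▸ h)
    have hav : a = v → a ≠ u := fun e => e ▸ Ne.symm huv
    have hbv : b = v → b ≠ u := fun e => e ▸ Ne.symm huv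
    simp only [mem_delete_arcs, mem_extend_arcs hK hv, mem_extend_arcs hK' hv',
      delete_verts, Finset.mem_sdiff, Finset.mem_singleton]
    constructor
    · rintro ⟨h | ⟨rfl, h⟩ | ⟨rfl, h⟩ | ⟨ho, rfl, h1, h2⟩ | ⟨ho, rfl, h1, h2⟩, hne1, hne2⟩
      · exact Or.inl ⟨h, hne1, hne2⟩
      · exact Or.inr (Or.inl ⟨rfl, h⟩)
      · exact Or.inr (Or.inr (Or.inl ⟨rfl, h⟩))
      · exact Or.inr (Or.inr (Or.inr (Or.inl ⟨ho, rfl, ⟨h1, hne2⟩, h2⟩)))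
      · exact Or.inr (Or.inr (Or.inr (Or.inr ⟨ho, rfl, ⟨h1, hne1⟩, h2⟩)))
    · rintro (⟨h, hne1, hne2⟩ | ⟨rfl, h⟩ | ⟨rfl, h⟩ | ⟨ho, rfl, ⟨h1, hne2⟩, h2⟩ |
        ⟨ho, rfl, ⟨h1, hne1⟩, h2⟩)
      · exact ⟨Or.inl h, hne1, hne2⟩
      · exact ⟨Or.inr (Or.inl ⟨rfl, h⟩), haK h, hbv rfl⟩
      · exact ⟨Or.inr (Or.inr (Or.inl ⟨rfl, h⟩)), hav rfl, hbK h⟩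
      · exact ⟨Or.inr (Or.inr (Or.inr (Or.inl ⟨ho, rfl, h1, h2⟩))), hav rfl, hne2⟩
      · exact ⟨Or.inr (Or.inr (Or.inr (Or.inr ⟨ho, rfl, h1, h2⟩))), hne1, hbv rfl⟩

lemma card_ge {m : ℕ} {D : Dgraph} (h : IsDTree m D) : m ≤ D.verts.card := by
  induction h with
  | base S hS => rw [completeOn_verts, hS]
  | grow D hD w hw K hK hKcard hKcomp out ih =>
    rw [extend_verts, Finset.card_insert_of_notMem hw]
    omega

lemma le_recipDeg_of_complete {D : Dgraph} {K : Finset ℕ}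
    (h : (completeOn K).IsSubdigraph D) {v : ℕ} (hvK : v ∈ K) :
    K.card - 1 ≤ D.recipDeg v := by
  have hKD : K ⊆ D.verts := h.1
  have hsub : K.erase v ⊆ D.recipSet v := by
    intro w hw
    rw [Finset.mem_erase] at hw
    refine Finset.mem_filter.mpr ⟨hKD hw.2, ?_, ?_⟩
    · exact h.2 (mem_completeOn_arcs.mpr ⟨hvK, hw.2, fun e => hw.1 e.symm⟩)
    · exact h.2 (mem_completeOn_arcs.mpr ⟨hw.2, hvK, hw.1⟩)
  calc K.card - 1 = (K.erase v).card := (Finset.card_erase_of_mem hvK).symm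
    _ ≤ _ := Finset.card_le_card hsub

lemma min_recipDeg {m : ℕ} : ∀ D : Dgraph, IsDTree m D →
    ∀ v ∈ D.verts, m + 1 ≤ D.verts.card → m ≤ D.recipDeg v := by
  intro D hD
  induction hD with
  | base S hS =>
    intro v hv hcard
    rw [completeOn_verts, hS] at hcard
    omega
  | grow D' hD' w hw K hK hKcard hKcomp out ih =>
    intro v hv hcard
    rw [extend_verts, Finset.mem_insert] at hv
    rcases hv with rfl | hv
    · rw [recipDeg_extend_self hK hw, hKcard]
    · by_cases hvK : v ∈ K
      · have h1 := le_recipDeg_of_complete hKcomp hvK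
        have hm1 : 1 ≤ K.card := Finset.card_pos.mpr ⟨v, hvK⟩
        rw [recipDeg_extend_mem hK hw hv hvK]
        omega
      · rw [recipDeg_extend_notMem hK hw hv hvK]
        apply ih v hv
        by_contra hlt
        have h1 : D'.verts.card = m := by
          have := card_ge hD'
          omega
        have h2 : K = D'.verts :=
          Finset.eq_of_subset_of_card_le hK (by omega)
        exact hvK (h2 ▸ hv)

lemma aux {m : ℕ} (hm : 1 ≤ m) : ∀ D : Dgraph, IsDTree m D →
    ∀ v ∈ D.verts, D.recipDeg v = m → IsDTree m (D.delete {v}) := by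
  intro D hD
  induction hD with
  | base S hS =>
    intro v hv hdeg
    rw [completeOn_verts] at hv
    rw [recipDeg_completeOn hv, hS] at hdeg
    omega
  | grow D' hD' w hw K hK hKcard hKcomp out ih =>
    intro v hv hdeg
    rw [extend_verts, Finset.mem_insert] at hv
    rcases hv with rfl | hv
    · rw [delete_extend_self hK hw]
      exact hD'
    · have hvw : v ≠ w := fun e => hw (e ▸ hv)
      by_cases hvK : v ∈ K
      · rw [recipDeg_extend_mem hK hw hv hvK] at hdeg
        by_cases hc : D'.verts.card = m
        · -- D' is a complete digraph on K = D'.verts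
          have h2 : K = D'.verts :=
            Finset.eq_of_subset_of_card_le hK (by omega)
          have hD'eq : D' = completeOn K := by
            rw [h2]; exact eq_completeOn (h2 ▸ hKcomp)
          have hwK : w ∉ K := fun h => hw (hK h)
          have heq : D'.extend w K out = completeOn (insert w K) := by
            rw [hD'eq]
            exact extend_complete hwK out
          rw [heq, delete_completeOn]
          refine IsDTree.base _ ?_
          rw [Finset.card_sdiff_of_subset (Finset.singleton_subset_iff.mpr
            (Finset.mem_insert_of_mem hvK)), Finset.card_insert_of_notMem hwK,
            Finset.card_singleton, hKcard]
          omega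
        · have hge : m + 1 ≤ D'.verts.card := by
            have := card_ge hD'
            omega
          have := min_recipDeg D' hD' v hv hge
          omega
      · rw [recipDeg_extend_notMem hK hw hv hvK] at hdeg
        have htree := ih v hv hdeg
        rw [delete_extend_comm hK hw hvw hvK]
        have hw' : w ∉ (D'.delete {v}).verts := by
          rw [delete_verts, Finset.mem_sdiff]
          exact fun h => hw h.1
        have hK' : K ⊆ (D'.delete {v}).verts := by
          intro x hx
          rw [delete_verts, Finset.mem_sdiff, Finset.mem_singleton]
          exact ⟨hK hx, fun e => hvK (e ▸ hx)⟩
        have hKcomp' : (completeOn K).IsSubdigraph (D'.delete {v}) := by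
          refine ⟨hK', ?_⟩
          rintro ⟨a, b⟩ he
          rw [mem_completeOn_arcs] at he
          rw [mem_delete_arcs]
          exact ⟨hKcomp.2 (mem_completeOn_arcs.mpr he), Finset.mem_singleton.not.mpr
            (fun e => hvK (e ▸ he.1)), Finset.mem_singleton.not.mpr
            (fun e => hvK (e ▸ he.2.1))⟩
        exact IsDTree.grow _ htree w hw' K hK' hKcard hKcomp' out

end Dgraph

/-- Deleting a vertex of reciprocal-degree `k-1` from a directed `(k-1)`-tree
on `n ≥ k` vertices yields a directed `(k-1)`-tree on `n-1` vertices. -/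
theorem stmt7 (k n : ℕ) (hk : 2 ≤ k) (hn : k ≤ n)
    (D : Dgraph) (hD : Dgraph.IsDTree (k - 1) D) (hcard : D.verts.card = n)
    (v : ℕ) (hv : v ∈ D.verts) (hdeg : D.recipDeg v = k - 1) :
    Dgraph.IsDTree (k - 1) (D.delete {v}) ∧ (D.delete {v}).verts.card = n - 1 := by
  constructor
  · exact Dgraph.aux (by omega) D hD v hv hdeg
  · rw [Dgraph.delete_verts, Finset.card_sdiff_of_subset (Finset.singleton_subset_iff.mpr hv),
      hcard, Finset.card_singleton]
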